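/- There exist an irreducible homogeneous polynomial f of degree 3 in ℂ[x₀,…,x₅] and a 6×6 skew-symmetric matrix M, all of whose entries are homogeneous of degree 1, such that det M = f². -/

import Mathlib

set_option maxRecDepth 100000
set_option maxHeartbeats 1000000

open MvPolynomial Matrix

noncomputable section PfaffianAux

/-- The cubic `f = x₀³ + x₁x₂²`, viewed in `(ℂ[x₁,…,x₅])[x₀]`. -/
private def pAux : Polynomial (MvPolynomial (Fin 5) ℂ) :=
  Polynomial.X ^ 3 + Polynomial.C (X 0 * X 1 ^ 2)

private lemma primeX0 : Prime (X (0 : Fin 5) : MvPolynomial (Fin 5) ℂ) := by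
  have h : Prime ((MvPolynomial.finSuccEquiv ℂ 4) (X 0 : MvPolynomial (Fin 5) ℂ)) := by
    rw [finSuccEquiv_X_zero]; exact Polynomial.prime_X
  exact (MulEquiv.prime_iff
    (MvPolynomial.finSuccEquiv ℂ 4).toRingEquiv.toMulEquiv).mp h

private lemma notdvd : ¬ (X (0 : Fin 5) : MvPolynomial (Fin 5) ℂ) ∣ X 1 := by
  rintro ⟨q, hq⟩
  have := congrArg (MvPolynomial.eval (fun i : Fin 5 => if i = 1 then (1 : ℂ) else 0)) hq
  simp at this

/-- `pAux` is irreducible, by Eisenstein's criterion at the prime `(x₁)`. -/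
private lemma pAux_irr : Irreducible pAux := by
  have hdeg : pAux.natDegree = 3 := Polynomial.natDegree_X_pow_add_C
  have hmonic : pAux.Monic := Polynomial.monic_X_pow_add
    (lt_of_le_of_lt Polynomial.degree_C_le (by decide))
  have hPprime : (Ideal.span {(X 0 : MvPolynomial (Fin 5) ℂ)}).IsPrime :=
    (Ideal.span_singleton_prime primeX0.ne_zero).mpr primeX0
  have hEis : pAux.IsEisensteinAt (Ideal.span {(X 0 : MvPolynomial (Fin 5) ℂ)}) := by
    constructor
    · rw [hmonic.leadingCoeff]
      exact fun h => hPprime.ne_top (Ideal.eq_top_of_isUnit_mem _ h isUnit_one)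
    · intro n hn
      rw [hdeg] at hn
      interval_cases n <;>
        simp [pAux, Polynomial.coeff_X_pow, Ideal.mem_span_singleton]
    · rw [Ideal.span_singleton_pow, Ideal.mem_span_singleton]
      intro hdvd
      simp only [pAux, Polynomial.coeff_add, Polynomial.coeff_X_pow, Polynomial.coeff_C] at hdvd
      norm_num at hdvd
      rw [pow_two, pow_two] at hdvd
      have h1 : (X (0 : Fin 5) : MvPolynomial (Fin 5) ℂ) ∣ X 1 * X 1 :=
        (mul_dvd_mul_iff_left primeX0.ne_zero).mp hdvd
      rcases (primeX0.2.2 _ _ h1) with h | h <;> exact notdvd h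
  exact hEis.irreducible hPprime hmonic.isPrimitive (by omega)

/-- The cubic `f = x₀³ + x₁x₂²` is irreducible in `ℂ[x₀,…,x₅]`. -/
private lemma f_irr : Irreducible (X 0 ^ 3 + X 1 * X 2 ^ 2 : MvPolynomial (Fin 6) ℂ) := by
  have h1 : (X (1 : Fin 6) : MvPolynomial (Fin 6) ℂ) = X (Fin.succ 0) := rfl
  have h2 : (X (2 : Fin 6) : MvPolynomial (Fin 6) ℂ) = X (Fin.succ 1) := rfl
  have himg : (MvPolynomial.finSuccEquiv ℂ 5)
      ((X 0 ^ 3 + X 1 * X 2 ^ 2 : MvPolynomial (Fin 6) ℂ)) = pAux := by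
    rw [h1, h2, map_add, map_pow, _root_.map_mul, map_pow, finSuccEquiv_X_zero,
      finSuccEquiv_X_succ, finSuccEquiv_X_succ, ← Polynomial.C_pow, ← Polynomial.C_mul]
    rfl
  have := (MulEquiv.irreducible_iff
    (MvPolynomial.finSuccEquiv ℂ 5).toRingEquiv.toMulEquiv
    (x := (X 0 ^ 3 + X 1 * X 2 ^ 2 : MvPolynomial (Fin 6) ℂ))).mp
  apply this
  show Irreducible ((MvPolynomial.finSuccEquiv ℂ 5) _)
  rw [himg]
  exact pAux_irr

/-- A `3 × 3` matrix of linear forms with determinant `x₀³ + x₁x₂²`. -/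
private def Amat : Matrix (Fin 3) (Fin 3) (MvPolynomial (Fin 6) ℂ) :=
  !![X 0, 0, X 1; -X 2, X 0, 0; 0, -X 2, X 0]

/-- The skew-symmetric block matrix `[[0, A], [-Aᵀ, 0]]`, reindexed over `Fin 6`. -/
private def Mmat : Matrix (Fin 6) (Fin 6) (MvPolynomial (Fin 6) ℂ) :=
  (Matrix.fromBlocks 0 Amat (-Amatᵀ) 0).submatrix
    (finSumFinEquiv : Fin 3 ⊕ Fin 3 ≃ Fin 6).symm (finSumFinEquiv : Fin 3 ⊕ Fin 3 ≃ Fin 6).symm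

private lemma Mmat_skew : Mmatᵀ = -Mmat := by
  unfold Mmat
  rw [Matrix.transpose_submatrix, Matrix.fromBlocks_transpose]
  have h : (Matrix.fromBlocks 0ᵀ (-Amatᵀ)ᵀ Amatᵀ 0ᵀ)
      = -(Matrix.fromBlocks (0 : Matrix (Fin 3) (Fin 3) (MvPolynomial (Fin 6) ℂ))
          Amat (-Amatᵀ) 0) := by
    simp [Matrix.fromBlocks_neg]
  rw [h, Matrix.submatrix_neg]
  rfl

private lemma Mmat_linear : ∀ i j, ((Mmat i j).IsHomogeneous 1) := by
  intro i j
  rcases hi : (finSumFinEquiv : Fin 3 ⊕ Fin 3 ≃ Fin 6).symm i with a | a <;>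
    rcases hj : (finSumFinEquiv : Fin 3 ⊕ Fin 3 ≃ Fin 6).symm j with b | b <;>
    simp only [Mmat, Matrix.submatrix_apply, hi, hj] <;>
    fin_cases a <;> fin_cases b <;>
      simp [Amat, Matrix.transpose_apply, Matrix.vecHead, Matrix.vecTail, Function.comp] <;>
      first
        | exact isHomogeneous_zero _ _ _
        | exact isHomogeneous_X ℂ _
        | exact (isHomogeneous_X ℂ _).neg

private lemma Mmat_det : Mmat.det = (X 0 ^ 3 + X 1 * X 2 ^ 2 : MvPolynomial (Fin 6) ℂ) ^ 2 := by
  have hA : Amat.det = (X 0 ^ 3 + X 1 * X 2 ^ 2 : MvPolynomial (Fin 6) ℂ) := by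
    simp [Amat, Matrix.det_fin_three]
    ring
  have hswap : Matrix.fromBlocks (0 : Matrix (Fin 3) (Fin 3) (MvPolynomial (Fin 6) ℂ))
        Amat (-Amatᵀ) 0
      = (Matrix.fromBlocks Amat 0 0 (-Amatᵀ)).submatrix id (Equiv.sumComm (Fin 3) (Fin 3)) := by
    ext i j
    cases i <;> cases j <;> rfl
  have hsign : Equiv.Perm.sign (Equiv.sumComm (Fin 3) (Fin 3)) = -1 := by decide
  rw [Mmat, Matrix.det_submatrix_equiv_self, hswap, Matrix.det_permute', hsign,
    Matrix.det_fromBlocks_zero₂₁, Matrix.det_neg, Matrix.det_transpose, hA]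
  simp [Fintype.card_fin]
  ring

end PfaffianAux

/-- There exist an irreducible homogeneous cubic `f` in
`ℂ[x₀,…,x₅]` and a `6 × 6` skew-symmetric matrix `M` of linear forms with
`det M = f ^ 2`. -/
theorem exists_cubic_pfaffian_presentation :
    ∃ (f : MvPolynomial (Fin 6) ℂ)
      (M : Matrix (Fin 6) (Fin 6) (MvPolynomial (Fin 6) ℂ)),
      Irreducible f ∧ f.IsHomogeneous 3 ∧
      M.transpose = -M ∧ (∀ i j, (M i j).IsHomogeneous 1) ∧ M.det = f ^ 2 := by
  refine ⟨X 0 ^ 3 + X 1 * X 2 ^ 2, Mmat, f_irr, ?_, Mmat_skew, Mmat_linear, Mmat_det⟩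
  have := ((isHomogeneous_X ℂ (0 : Fin 6)).pow 3).add
    ((isHomogeneous_X ℂ (1 : Fin 6)).mul ((isHomogeneous_X ℂ (2 : Fin 6)).pow 2))
  simpa using this
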